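/- Define σ∞ = ⋃_{n ∈ ℕ} ⋃_{k,l ∈ {±1}^n} spec(A^{k,l}_fin), where A^{k,l}_fin ∈ ℂ^{(n+1)×(n+1)} is tridiagonal with zero diagonal, subdiagonal k, superdiagonal l. For every m ≥ 1 and k ∈ {±1}^m with ∏ k_j = 1, with p the polynomial satisfying det(a^k(φ) − λI) = (−1)^m(p(λ) − 2cos φ), the set p⁻¹([−2,2]) is contained in the closure of σ∞. -/

import Mathlib

open Complex Matrix

/-- The symbol matrix `a^k(φ) ∈ ℂ^{m×m}` of an `m`-periodic tridiagonal sign operator: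
superdiagonal entries `1`, subdiagonal entries `k₁,…,k_{m-1}` (here `k 0, …, k (m-2)`),
corner entries `k_m e^{iφ}` at position `(1,m)` and `e^{-iφ}` at position `(m,1)`.
The entries are defined as sums so that for small `m` overlapping positions add up
(e.g. for `m = 1` the matrix is `(k₁ e^{iφ} + e^{-iφ})`). -/
noncomputable def symb (m : ℕ) (k : ℕ → ℂ) (φ : ℝ) : Matrix (Fin m) (Fin m) ℂ :=
  Matrix.of fun r c =>
    (if (c : ℕ) = (r : ℕ) + 1 then 1 else 0) +
    (if (r : ℕ) = (c : ℕ) + 1 then k c else 0) +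
    (if (r : ℕ) = 0 ∧ (c : ℕ) = m - 1 then k c * Complex.exp (φ * Complex.I) else 0) +
    (if (r : ℕ) = m - 1 ∧ (c : ℕ) = 0 then Complex.exp (-φ * Complex.I) else 0)

/-- The finite tridiagonal matrix `A^{k,l} ∈ ℂ^{(n+1)×(n+1)}` with subdiagonal entries
`k₁,…,kₙ` (here `k 0, …, k (n-1)`), superdiagonal entries `l₁,…,lₙ`, zeros elsewhere. -/
def Afin (n : ℕ) (k l : ℕ → ℂ) : Matrix (Fin (n + 1)) (Fin (n + 1)) ℂ :=
  Matrix.of fun i j =>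
    if (j : ℕ) = (i : ℕ) + 1 then l i else if (i : ℕ) = (j : ℕ) + 1 then k j else 0

/-- The set `σ∞` of all eigenvalues of finite tridiagonal sign matrices. -/
noncomputable def sigmaInf : Set ℂ :=
  {lam : ℂ | ∃ n : ℕ, 1 ≤ n ∧ ∃ k l : ℕ → ℂ,
    (∀ i < n, k i = 1 ∨ k i = -1) ∧ (∀ i < n, l i = 1 ∨ l i = -1) ∧
    lam ∈ spectrum ℂ (Afin n k l)}

/-!
An eigenvector of `a^k(φ)` for `λ` extends quasi-periodically, `ψ (n + m) = e^{-iφ} ψ n`, to a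
solution of the recurrence `ψ (n + 2) = λ ψ (n + 1) - k_{n mod m} ψ n`. Hence `e^{-iφ}` is an
eigenvalue of the period transfer matrix `T(λ)`, and as `det T(λ) = ∏ kⱼ = 1` this forces
`tr T(λ) = 2 cos φ`. Every `2 × 2` matrix of determinant one satisfies
`T ^ N = S_{N-1}(tr T) T - S_{N-2}(tr T)` (Chebyshev polynomials `S`), and
`S_{N-1}(2 cos φ) = sin (N φ) / sin φ`. So if `φ = π q` with `q ∈ ℚ ∩ (0, 1)` and `N` is a multiple
of the denominator of `q`, then `T(λ) ^ N` is scalar, and the solution with initial values `0, 1`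
vanishes again at `n = N m`: it is an eigenvector of a finite tridiagonal sign matrix, so
`λ ∈ σ∞`. Finally the values `2 cos (π q)` are dense in `[-2, 2]` and the nonconstant
polynomial `p` is an open map, so every `λ` with `p λ ∈ [-2, 2]` is a limit of such eigenvalues.
-/

namespace Matrix

open Polynomial.Chebyshev

variable {R : Type*} [CommRing R]

theorem sq_eq_trace_smul_sub_det_smul (A : Matrix (Fin 2) (Fin 2) R) :
    A ^ 2 = A.trace • A - A.det • 1 := by
  nontriviality R
  have h := A.aeval_self_charpoly
  rw [charpoly_fin_two] at h
  simpa [Algebra.smul_def, sub_add, sub_eq_zero] using h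

theorem pow_eq_S_smul_sub_S_smul {A : Matrix (Fin 2) (Fin 2) R} (hA : A.det = 1) (n : ℕ) :
    A ^ n = (S R (n - 1)).eval A.trace • A - (S R (n - 2)).eval A.trace • 1 := by
  induction n with
  | zero => simp [S_neg_one, S_neg_two]
  | succ n ih =>
    rw [pow_succ, ih, sub_mul, smul_mul_assoc, smul_mul_assoc, one_mul, ← sq,
      sq_eq_trace_smul_sub_det_smul, hA]
    push_cast
    rw [show (n : ℤ) + 1 - 1 = n by ring, show (n : ℤ) + 1 - 2 = n - 1 by ring, S_eq R n]
    simp only [Polynomial.eval_sub, Polynomial.eval_mul, Polynomial.eval_X, smul_sub, smul_smul,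
      sub_smul, one_smul, mul_comm A.trace]
    abel

theorem trace_mul_eq_sq_add_one [IsDomain R] {A : Matrix (Fin 2) (Fin 2) R} (hA : A.det = 1)
    {w : Fin 2 → R} (hw : w ≠ 0) {z : R} (h : A *ᵥ w = z • w) : A.trace * z = z ^ 2 + 1 := by
  have h2 : (A ^ 2) *ᵥ w = (z ^ 2) • w := by
    rw [sq, ← mulVec_mulVec, h, mulVec_smul, h, smul_smul, sq]
  rw [sq_eq_trace_smul_sub_det_smul, hA, sub_mulVec, smul_mulVec, one_smul, one_mulVec, h,
    smul_smul] at h2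
  have h3 : (A.trace * z - (z ^ 2 + 1)) • w = 0 := by
    rw [sub_smul, add_smul, one_smul, ← h2]
    abel
  exact sub_eq_zero.1 ((smul_eq_zero.1 h3).resolve_right hw)

theorem exists_pow_eq_smul_one_of_trace_eq_two_mul_cos {A : Matrix (Fin 2) (Fin 2) ℂ}
    (hA : A.det = 1) {θ : ℂ} (htr : A.trace = 2 * Complex.cos θ) (hθ : Complex.sin θ ≠ 0)
    {N : ℕ} (hN : Complex.sin (N * θ) = 0) : ∃ a : ℂ, A ^ N = a • 1 := by
  have hS : (S ℂ (N - 1)).eval A.trace = 0 := by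
    have := S_two_mul_complex_cos θ (N - 1)
    rw [← htr] at this
    simpa [hN, hθ] using this
  exact ⟨-(S ℂ (N - 2)).eval A.trace, by rw [pow_eq_S_smul_sub_S_smul hA, hS]; simp⟩

end Matrix

theorem Matrix.mem_spectrum_of_mulVec_eq_smul {n R : Type*} [Fintype n] [DecidableEq n] [Field R]
    {A : Matrix n n R} {v : n → R} (hv : v ≠ 0) {μ : R} (h : A *ᵥ v = μ • v) :
    μ ∈ spectrum R A := by
  rw [← Matrix.spectrum_toLin']
  exact Module.End.HasEigenvalue.mem_spectrum <| Module.End.hasEigenvalue_of_hasEigenvector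
    ⟨by simpa [Module.End.mem_eigenspace_iff] using h, hv⟩

section Transfer

variable {R : Type*} [CommRing R]

def transferMatrix (lam : R) (c : ℕ → R) : ℕ → Matrix (Fin 2) (Fin 2) R
  | 0 => 1
  | n + 1 => !![lam, -c n; 1, 0] * transferMatrix lam c n

variable (lam : R) (c : ℕ → R)

theorem det_transferMatrix (n : ℕ) :
    (transferMatrix lam c n).det = ∏ i ∈ Finset.range n, c i := by
  induction n with
  | zero => simp [transferMatrix]
  | succ n ih =>
    rw [transferMatrix, Matrix.det_mul, ih, Finset.prod_range_succ, Matrix.det_fin_two_of]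
    ring

theorem transferMatrix_add (n j : ℕ) :
    transferMatrix lam c (n + j) =
      transferMatrix lam (fun i => c (n + i)) j * transferMatrix lam c n := by
  induction j with
  | zero => simp [transferMatrix]
  | succ j ih => rw [← add_assoc, transferMatrix, ih, transferMatrix, mul_assoc]

theorem transferMatrix_mul_of_periodic {m : ℕ} (hc : Function.Periodic c m) (t : ℕ) :
    transferMatrix lam c (m * t) = transferMatrix lam c m ^ t := by
  induction t with
  | zero => simp [transferMatrix]
  | succ t ih =>
    have hshift : (fun i => c (m * t + i)) = c := funext fun i => by
      rw [add_comm, mul_comm]; exact hc.nat_mul t i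
    rw [mul_add_one, transferMatrix_add, hshift, ih, pow_succ']

theorem transferMatrix_mulVec {y : ℕ → R} (hy : ∀ n, y (n + 2) = lam * y (n + 1) - c n * y n)
    (n : ℕ) : transferMatrix lam c n *ᵥ ![y 1, y 0] = ![y (n + 1), y n] := by
  induction n with
  | zero => simp [transferMatrix]
  | succ n ih =>
    rw [transferMatrix, ← Matrix.mulVec_mulVec, ih, hy]
    ext i; fin_cases i <;> simp [Matrix.mulVec, dotProduct, Fin.sum_univ_two]; ring

def dirichletSol (lam : R) (c : ℕ → R) : ℕ → R
  | 0 => 0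
  | 1 => 1
  | n + 2 => lam * dirichletSol lam c (n + 1) - c n * dirichletSol lam c n

end Transfer

theorem Afin_mulVec_apply {n : ℕ} (c l : ℕ → ℂ) {y : ℕ → ℂ} (h0 : y 0 = 0) (hn : y (n + 2) = 0)
    (i : Fin (n + 1)) :
    (Afin n (fun j => c (j + 1)) l *ᵥ fun j => y (j + 1)) i = l i * y (i + 2) + c i * y i := by
  obtain ⟨i, hi⟩ := i
  simp only [Matrix.mulVec, dotProduct, Afin, Matrix.of_apply, ite_mul, zero_mul]
  rw [Fin.sum_univ_eq_sum_range (fun j => if j = i + 1 then l i * y (j + 1) else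
    if i = j + 1 then c (j + 1) * y (j + 1) else 0)]
  rcases i with _ | i
  · simp [Finset.sum_ite_eq', h0]
    grind
  · rw [Finset.sum_congr rfl (g := fun j => (if j = i + 2 then l (i + 1) * y (j + 1) else 0) +
      (if j = i then c (j + 1) * y (j + 1) else 0))
      (fun j _ => by split_ifs <;> first | omega | simp)]
    simp only [Finset.sum_add_distrib, Finset.sum_ite_eq', Finset.mem_range, Order.lt_add_one_iff]
    grind

theorem mem_spectrum_Afin_of_dirichlet {lam : ℂ} {c y : ℕ → ℂ}
    (hy : ∀ n, y (n + 2) = lam * y (n + 1) - c n * y n) (h0 : y 0 = 0) (h1 : y 1 ≠ 0)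
    {n : ℕ} (hn : y (n + 2) = 0) : lam ∈ spectrum ℂ (Afin n (fun j => c (j + 1)) 1) := by
  refine Matrix.mem_spectrum_of_mulVec_eq_smul (v := fun j : Fin (n + 1) => y (j + 1))
    (fun h => h1 (congrFun h 0)) ?_
  ext i
  rw [Afin_mulVec_apply c 1 h0 hn, Pi.one_apply, one_mul, hy]
  simp

theorem symb_mulVec_apply {m : ℕ} (k : ℕ → ℂ) (φ : ℝ) (f : ℕ → ℂ) (i : Fin m) :
    (symb m k φ *ᵥ fun j => f j) i =
      (if (i : ℕ) + 1 < m then f (i + 1) else 0) +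
      (if (i : ℕ) = 0 then 0 else k (i - 1) * f (i - 1)) +
      (if (i : ℕ) = 0 then k (m - 1) * Complex.exp (φ * Complex.I) * f (m - 1) else 0) +
      (if (i : ℕ) = m - 1 then Complex.exp (-φ * Complex.I) * f 0 else 0) := by
  obtain ⟨i, hi⟩ := i
  simp only [Matrix.mulVec, dotProduct, symb, Matrix.of_apply, add_mul, ite_mul, zero_mul, one_mul,
    Finset.sum_add_distrib]
  rw [Fin.sum_univ_eq_sum_range (fun j => if j = i + 1 then f j else 0),
    Fin.sum_univ_eq_sum_range (fun j => if i = j + 1 then k j * f j else 0),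
    Fin.sum_univ_eq_sum_range
      (fun j => if i = 0 ∧ j = m - 1 then k j * Complex.exp (φ * Complex.I) * f j else 0),
    Fin.sum_univ_eq_sum_range
      (fun j => if i = m - 1 ∧ j = 0 then Complex.exp (-φ * Complex.I) * f j else 0)]
  rcases i with _ | i <;> simp [Finset.sum_ite_eq, Finset.sum_ite_eq', ite_and] <;> grind

section Bloch

variable {m : ℕ} [NeZero m]

def blochSeq (z : ℂ) (v : Fin m → ℂ) (n : ℕ) : ℂ := z ^ (n / m) * v (Fin.ofNat m n)

theorem blochSeq_add_mul (z : ℂ) (v : Fin m → ℂ) (n t : ℕ) :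
    blochSeq z v (n + m * t) = z ^ t * blochSeq z v n := by
  simp only [blochSeq, Nat.add_mul_div_left _ _ (NeZero.pos m), pow_add, Fin.ofNat,
    Nat.add_mul_mod_self_left]
  ring

theorem blochSeq_coe (z : ℂ) (v : Fin m → ℂ) (i : Fin m) : blochSeq z v i = v i := by
  simp [blochSeq, Nat.div_eq_of_lt i.isLt]

theorem blochSeq_add_two {k : ℕ → ℂ} {φ : ℝ} {lam : ℂ} {v : Fin m → ℂ}
    (hv : symb m k φ *ᵥ v = lam • v) (n : ℕ) :
    blochSeq (Complex.exp (-φ * Complex.I)) v (n + 2) =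
      lam * blochSeq (Complex.exp (-φ * Complex.I)) v (n + 1) -
        k (n % m) * blochSeq (Complex.exp (-φ * Complex.I)) v n := by
  set z := Complex.exp (-φ * Complex.I)
  set ψ := blochSeq z v
  have hz : z * Complex.exp (φ * Complex.I) = 1 := by
    rw [← Complex.exp_add]; simp
  have hper (j : ℕ) : ψ (j + m) = z * ψ j := by simpa using blochSeq_add_mul z v j 1
  have hrow (i : Fin m) : (symb m k φ *ᵥ fun j => ψ j) i = lam * ψ i := by
    simp only [ψ, blochSeq_coe, hv]; rfl
  -- The recurrence at `r` is row `r + 1` of the eigenvalue equation; for `r + 1 = m` it is row `0`,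
  -- whose corner entry `k_m e^{iφ}` is removed by multiplying the row with `z = e^{-iφ}`.
  have hwindow (r : ℕ) (hr : r < m) : ψ (r + 2) = lam * ψ (r + 1) - k r * ψ r := by
    rcases (by omega : r + 2 < m ∨ r + 2 = m ∨ r + 1 = m) with h | h | h
    · have := hrow ⟨r + 1, by omega⟩
      simp only [symb_mulVec_apply, h, show r + 1 ≠ m - 1 by omega, ↓reduceIte, Nat.add_eq_zero_iff,
        one_ne_zero, and_false, add_tsub_cancel_right, add_zero] at this
      linear_combination this
    · subst h
      have := hrow ⟨r + 1, by omega⟩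
      simp only [symb_mulVec_apply, lt_self_iff_false, ↓reduceIte, Nat.add_eq_zero_iff, one_ne_zero,
        and_false, add_tsub_cancel_right, zero_add, add_zero, Nat.add_one_sub_one] at this
      rw [show r + 2 = 0 + (r + 2) by omega, hper]
      linear_combination this
    · subst h
      have := hrow ⟨0, by omega⟩
      simp only [Fin.zero_eta, symb_mulVec_apply, Fin.coe_ofNat_eq_mod, Nat.zero_mod, zero_add,
        lt_add_iff_pos_left, ↓reduceIte, add_zero, add_tsub_cancel_right] at this
      rw [show r + 2 = 1 + (r + 1) by omega, hper, ← zero_add (r + 1), hper]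
      rcases r with _ | r
      · simp only [lt_self_iff_false, ↓reduceIte, zero_add] at this
        rw [hper]
        linear_combination z * this - k 0 * ψ 0 * hz
      · simp only [Order.lt_add_one_iff, zero_le, ↓reduceIte, Nat.right_eq_add, Nat.add_eq_zero_iff,
          one_ne_zero, and_false, add_zero] at this
        linear_combination z * this - k (r + 1) * ψ (r + 1) * hz
  obtain ⟨r, t, hr, rfl⟩ : ∃ r t, r < m ∧ n = r + m * t :=
    ⟨n % m, n / m, Nat.mod_lt _ (NeZero.pos m), (Nat.mod_add_div n m).symm⟩
  have hshift (j : ℕ) : ψ (j + m * t) = z ^ t * ψ j := blochSeq_add_mul z v j t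
  rw [Nat.add_mul_mod_self_left, Nat.mod_eq_of_lt hr, add_right_comm, hshift,
    add_right_comm, hshift, hshift, hwindow r hr]
  ring

end Bloch

theorem det_transferMatrix_mod_eq_one {m : ℕ} {k : ℕ → ℂ} (hprod : ∏ j ∈ Finset.range m, k j = 1)
    (lam : ℂ) : (transferMatrix lam (fun n => k (n % m)) m).det = 1 := by
  rw [det_transferMatrix, ← hprod]
  exact Finset.prod_congr rfl fun i hi => by rw [Nat.mod_eq_of_lt (Finset.mem_range.1 hi)]

theorem trace_transferMatrix_eq_two_mul_cos {m : ℕ} [NeZero m] {k : ℕ → ℂ}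
    (hprod : ∏ j ∈ Finset.range m, k j = 1) {φ : ℝ} {lam : ℂ}
    (h : (symb m k φ - lam • 1).det = 0) :
    (transferMatrix lam (fun n => k (n % m)) m).trace = 2 * Real.cos φ := by
  obtain ⟨v, hv0, hv⟩ := Matrix.exists_mulVec_eq_zero_iff.2 h
  rw [sub_mulVec, smul_mulVec, one_mulVec, sub_eq_zero] at hv
  have hrec := blochSeq_add_two hv
  set z := Complex.exp (-φ * Complex.I)
  set ψ := blochSeq z v
  set T := transferMatrix lam (fun n => k (n % m)) m
  have hw : ![ψ 1, ψ 0] ≠ 0 := by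
    intro hw
    refine hv0 (funext fun i => ?_)
    have := transferMatrix_mulVec lam _ hrec i
    rw [hw, mulVec_zero] at this
    simpa [ψ, blochSeq_coe] using (congrFun this 1).symm
  have heig : T *ᵥ ![ψ 1, ψ 0] = z • ![ψ 1, ψ 0] := by
    have hper (j : ℕ) : ψ (j + m) = z * ψ j := by simpa using blochSeq_add_mul z v j 1
    rw [transferMatrix_mulVec lam _ hrec, add_comm, hper, ← zero_add m, hper]
    simp
  have htr := Matrix.trace_mul_eq_sq_add_one (det_transferMatrix_mod_eq_one hprod lam) hw heig
  have hz : Complex.exp (φ * Complex.I) * z = 1 := by rw [← Complex.exp_add]; simp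
  refine mul_right_cancel₀ (Complex.exp_ne_zero (-φ * Complex.I)) ?_
  rw [htr, Complex.ofReal_cos, Complex.two_cos]
  linear_combination -hz

theorem mem_sigmaInf_of_det_symb_sub_eq_zero {m : ℕ} [NeZero m] {k : ℕ → ℂ}
    (hk : ∀ i < m, k i = 1 ∨ k i = -1) (hprod : ∏ j ∈ Finset.range m, k j = 1) {φ : ℝ}
    (hφ : Real.sin φ ≠ 0) {N : ℕ} (hN : 3 ≤ N) (hNφ : Real.sin (N * φ) = 0) {lam : ℂ}
    (h : (symb m k φ - lam • 1).det = 0) : lam ∈ sigmaInf := by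
  set c : ℕ → ℂ := fun n => k (n % m)
  have hc : Function.Periodic c m := fun n => by simp [c]
  have htr : (transferMatrix lam c m).trace = 2 * Complex.cos φ := by
    rw [trace_transferMatrix_eq_two_mul_cos hprod h, Complex.ofReal_cos]
  obtain ⟨a, ha⟩ := Matrix.exists_pow_eq_smul_one_of_trace_eq_two_mul_cos
    (det_transferMatrix_mod_eq_one hprod lam) htr (by exact_mod_cast hφ) (by exact_mod_cast hNφ)
  have hrec (n : ℕ) : dirichletSol lam c (n + 2) =
      lam * dirichletSol lam c (n + 1) - c n * dirichletSol lam c n := rfl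
  have hzero : dirichletSol lam c (m * N) = 0 := by
    have := transferMatrix_mulVec lam c hrec (m * N)
    rw [transferMatrix_mul_of_periodic lam c hc, ha] at this
    simpa [dirichletSol] using (congrFun this 1).symm
  have hmN : 3 ≤ m * N := hN.trans (Nat.le_mul_of_pos_left N (NeZero.pos m))
  obtain ⟨n, hn⟩ : ∃ n, m * N = n + 2 := ⟨m * N - 2, by omega⟩
  refine ⟨n, by omega, fun j => c (j + 1), 1,
    fun j _ => hk _ (Nat.mod_lt _ (NeZero.pos m)), fun _ _ => Or.inl rfl, ?_⟩
  exact mem_spectrum_Afin_of_dirichlet hrec rfl one_ne_zero (hn ▸ hzero)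

theorem exists_rat_two_mul_cos_mem {x : ℝ} (hx : x ∈ Set.Icc (-2) 2) {U : Set ℂ}
    (hU : U ∈ nhds (x : ℂ)) :
    ∃ q : ℚ, (q : ℝ) ∈ Set.Ioo 0 1 ∧ ((2 * Real.cos (Real.pi * q) : ℝ) : ℂ) ∈ U := by
  set t₀ := Real.arccos (x / 2) / Real.pi
  have hx₀ : x = 2 * Real.cos (Real.pi * t₀) := by
    rw [mul_div_cancel₀ _ Real.pi_pos.ne', Real.cos_arccos] <;> linarith [hx.1, hx.2]
  have ht₀ : t₀ ∈ closure (Set.Ioo 0 1 ∩ Set.range ((↑) : ℚ → ℝ)) := by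
    have : t₀ ∈ Set.Icc (0 : ℝ) 1 :=
      ⟨div_nonneg (Real.arccos_nonneg _) Real.pi_pos.le,
        div_le_one_of_le₀ (Real.arccos_le_pi _) Real.pi_pos.le⟩
    rw [← closure_Ioo zero_ne_one] at this
    exact closure_minimal (Rat.denseRange_cast.open_subset_closure_inter isOpen_Ioo)
      isClosed_closure this
  have hg : Continuous fun t : ℝ => ((2 * Real.cos (Real.pi * t) : ℝ) : ℂ) := by fun_prop
  obtain ⟨_, hqU, hq, q, rfl⟩ :=
    mem_closure_iff_nhds.1 ht₀ _ (hg.continuousAt.preimage_mem_nhds (hx₀ ▸ hU))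
  exact ⟨q, hq, hqU⟩

/-- For every `m ≥ 1` and `k ∈ {±1}^m` with `∏ kⱼ = 1`, with `p` the
polynomial satisfying `det(a^k(φ) − λI) = (−1)^m (p(λ) − 2cos φ)`, the set `p⁻¹([−2,2])`
(i.e. the spectrum of the periodic operator `A^k_per`) is contained in the closure of `σ∞`. -/
theorem preimage_Icc_subset_closure_sigmaInf
    (m : ℕ) (hm : 1 ≤ m) (k : ℕ → ℂ) (hk : ∀ i < m, k i = 1 ∨ k i = -1)
    (hprod : ∏ j ∈ Finset.range m, k j = 1)
    (p : Polynomial ℂ) (hpdeg : p.natDegree = m)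
    (hdet : ∀ (φ : ℝ) (lam : ℂ),
      (symb m k φ - lam • 1).det = (-1) ^ m * (p.eval lam - 2 * Real.cos φ)) :
    {lam : ℂ | ∃ x ∈ Set.Icc (-2 : ℝ) 2, p.eval lam = (x : ℂ)} ⊆ closure sigmaInf := by
  rintro lam ⟨x, hx, hpx⟩
  have : NeZero m := ⟨by omega⟩
  refine mem_closure_iff_nhds.2 fun U hU => ?_
  have hpU : p.eval '' U ∈ nhds (x : ℂ) :=
    hpx ▸ (p.isOpenQuotientMap_eval (by omega)).isOpenMap.image_mem_nhds hU
  obtain ⟨q, hq, lam', hlam'U, hlam'⟩ := exists_rat_two_mul_cos_mem hx hpU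
  have hsin : Real.sin (Real.pi * q) ≠ 0 :=
    (Real.sin_pos_of_pos_of_lt_pi (by nlinarith [Real.pi_pos, hq.1])
      (by nlinarith [Real.pi_pos, hq.2])).ne'
  have hsin_mul : Real.sin ((3 * q.den : ℕ) * (Real.pi * q)) = 0 := by
    have hnum : (q.den : ℝ) * q = q.num := by exact_mod_cast Rat.den_mul_eq_num q
    rw [show ((3 * q.den : ℕ) : ℝ) * (Real.pi * q) = (3 * q.num : ℤ) * Real.pi by
      push_cast; linear_combination 3 * Real.pi * hnum]
    exact Real.sin_int_mul_pi _
  refine ⟨lam', hlam'U, mem_sigmaInf_of_det_symb_sub_eq_zero hk hprod hsin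
    (by have := q.den_pos; omega) hsin_mul ?_⟩
  rw [hdet, show p.eval lam' = _ from hlam']
  push_cast
  ring
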